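/- arXiv:2305.08273 — 7 statements merged into one kernel-verified Lean document; each statement's English description precedes it below -/
import Mathlib

section
/- Let (π̂, r) be any pair of vectors obtained from the initialization π̂ = 0, r = x by a finite sequence of push operations (at arbitrary nodes, in arbitrary order). Then for every node i the invariant property holds at i, i.e., π̂(i) + γ₀·r(i) = γ₀·x(i) + Σ_j γ·w(i,j)·π̂(j)/(d(i)^β·d(j)^{1−β}). (Theorem 1, Invariant Property.) -/
open Finset

/-- Weighted degree of node `i`. -/
noncomputable def deg {n : ℕ} (w : Fin n → Fin n → ℝ) (i : Fin n) : ℝ := ∑ j, w i j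

/-- A push operation at node `i`, transforming the pair (estimate, residual). -/
noncomputable def pushAt {n : ℕ} (w : Fin n → Fin n → ℝ) (β γ₀ γ : ℝ) (i : Fin n)
    (p : (Fin n → ℝ) × (Fin n → ℝ)) : (Fin n → ℝ) × (Fin n → ℝ) :=
  (fun j => if j = i then p.1 i + γ₀ * p.2 i else p.1 j,
   fun j => if j = i then 0
     else p.2 j + γ * w i j * p.2 i / (deg w i ^ ((1 : ℝ) - β) * deg w j ^ β))

/-- One push step at some (arbitrary) node. -/
def pushStep {n : ℕ} (w : Fin n → Fin n → ℝ) (β γ₀ γ : ℝ)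
    (p q : (Fin n → ℝ) × (Fin n → ℝ)) : Prop :=
  ∃ i : Fin n, q = pushAt w β γ₀ γ i p

/-- The invariant property at node `i`:
`πh(i) + γ₀ r(i) = γ₀ x(i) + ∑_j γ w(i,j) πh(j) / (d(i)^β d(j)^(1-β))`. -/
noncomputable def invariantAt {n : ℕ} (w : Fin n → Fin n → ℝ) (β γ₀ γ : ℝ)
    (πh r x : Fin n → ℝ) (i : Fin n) : Prop :=
  πh i + γ₀ * r i =
    γ₀ * x i + ∑ j, γ * w i j * πh j / (deg w i ^ β * deg w j ^ ((1 : ℝ) - β))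

/-- Theorem 1 (Invariant Property): any pair `(πh, r)` obtained from the
initialization `πh = 0`, `r = x` by a finite sequence of push operations
satisfies the invariant property at every node. -/
theorem invariant_property {n : ℕ} (hn : 1 ≤ n) (w : Fin n → Fin n → ℝ)
    (hsym : ∀ i j, w i j = w j i) (hnn : ∀ i j, 0 ≤ w i j)
    (hdiag : ∀ i, w i i = 0) (hd : ∀ i, 0 < deg w i)
    (β γ₀ γ : ℝ) (hβ0 : 0 ≤ β) (hβ1 : β ≤ 1) (hγ₀ : γ₀ ≠ 0)
    (x : Fin n → ℝ) (p : (Fin n → ℝ) × (Fin n → ℝ))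
    (hp : Relation.ReflTransGen (pushStep w β γ₀ γ) (0, x) p) :
    ∀ i : Fin n, invariantAt w β γ₀ γ p.1 p.2 x i := by
  have key : ∀ (q : (Fin n → ℝ) × (Fin n → ℝ)),
      (∀ i, invariantAt w β γ₀ γ q.1 q.2 x i) → ∀ (k : Fin n) (i : Fin n),
      invariantAt w β γ₀ γ (pushAt w β γ₀ γ k q).1 (pushAt w β γ₀ γ k q).2 x i := by
    rintro ⟨πh, r⟩ hinv k i
    unfold invariantAt pushAt
    simp only
    by_cases hik : i = k
    · subst hik
      rw [if_pos rfl, if_pos rfl, mul_zero, add_zero]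
      have hsum : ∑ j, γ * w i j * (if j = i then πh i + γ₀ * r i else πh j) /
          (deg w i ^ β * deg w j ^ ((1:ℝ) - β)) =
          ∑ j, γ * w i j * πh j / (deg w i ^ β * deg w j ^ ((1:ℝ) - β)) := by
        apply Finset.sum_congr rfl
        intro j _
        by_cases hj : j = i
        · subst hj; simp [hdiag]
        · rw [if_neg hj]
      rw [hsum]
      exact hinv i
    · rw [if_neg hik, if_neg hik]
      have hδ : ∀ j : Fin n,
          γ * w i j * (if j = k then πh k + γ₀ * r k else πh j) /
            (deg w i ^ β * deg w j ^ ((1:ℝ) - β)) =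
          γ * w i j * πh j / (deg w i ^ β * deg w j ^ ((1:ℝ) - β)) +
          (if j = k then γ₀ * (γ * w k i * r k /
            (deg w k ^ ((1:ℝ) - β) * deg w i ^ β)) else 0) := by
        intro j
        by_cases hj : j = k
        · subst hj
          rw [if_pos rfl, if_pos rfl, hsym j i]
          ring
        · simp [hj]
      rw [Finset.sum_congr rfl (fun j _ => hδ j), Finset.sum_add_distrib,
        Finset.sum_ite_eq' Finset.univ k, if_pos (Finset.mem_univ k), mul_add]
      have := hinv i
      unfold invariantAt at this
      linarith
  induction hp with
  | refl =>
    intro i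
    unfold invariantAt
    simp
  | tail h hstep ih =>
    obtain ⟨k, rfl⟩ := hstep
    exact key _ ih k
end

section
/- Suppose the vectors π̂, r, x ∈ ℝ^n satisfy the vector-form invariant π̂ + γ₀·r = γ₀·x + γ·P·π̂. Let i be any node and let (π̂′, r′) be the result of a push at node i, i.e., π̂′ = π̂ + γ₀·r(i)·e_i and r′ = r − r(i)·e_i + γ·r(i)·P·e_i (where e_i is the i-th standard basis vector). Then π̂′ + γ₀·r′ = γ₀·x + γ·P·π̂′. (Inductive step in the proof of Theorem 1.) -/
open Finset Matrix

/-- The diagonal matrix `D^t` whose `(i,i)`-entry is `d(i)^t` (real power). -/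
noncomputable def Dpow {n : ℕ} (w : Fin n → Fin n → ℝ) (t : ℝ) :
    Matrix (Fin n) (Fin n) ℝ :=
  Matrix.diagonal fun i => deg w i ^ t

/-- The propagation matrix `P = D^{-β} A D^{β-1}`. -/
noncomputable def propP {n : ℕ} (w : Fin n → Fin n → ℝ) (β : ℝ) :
    Matrix (Fin n) (Fin n) ℝ :=
  Dpow w (-β) * Matrix.of w * Dpow w (β - 1)

/-- Inductive step in the proof of Theorem 1: a push at node `i` preserves the
vector-form invariant `πh + γ₀ r = γ₀ x + γ P πh`. -/
theorem push_preserves_invariant {n : ℕ} (hn : 1 ≤ n) (w : Fin n → Fin n → ℝ)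
    (hsym : ∀ i j, w i j = w j i) (hnn : ∀ i j, 0 ≤ w i j)
    (hdiag : ∀ i, w i i = 0) (hd : ∀ i, 0 < deg w i)
    (β γ₀ γ : ℝ) (hβ0 : 0 ≤ β) (hβ1 : β ≤ 1) (hγ₀ : γ₀ ≠ 0)
    (πh r x : Fin n → ℝ)
    (hinv : πh + γ₀ • r = γ₀ • x + γ • (propP w β).mulVec πh)
    (i : Fin n) (πh' r' : Fin n → ℝ)
    (hπh' : πh' = πh + (γ₀ * r i) • (Pi.single i 1 : Fin n → ℝ))
    (hr' : r' = r - (r i) • (Pi.single i 1 : Fin n → ℝ)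
        + (γ * r i) • (propP w β).mulVec ((Pi.single i 1 : Fin n → ℝ))) :
    πh' + γ₀ • r' = γ₀ • x + γ • (propP w β).mulVec πh' := by
  subst hπh' hr'
  rw [mulVec_add, mulVec_smul]
  linear_combination (norm := module) hinv
end

section
/- If 0 < |γ| < 1, then the matrix I − γ·P is invertible. -/
open Finset Matrix

/-- If `0 < |γ| < 1` then the matrix `I - γ P` is invertible. -/
theorem one_sub_smul_propP_isUnit {n : ℕ} (hn : 1 ≤ n) (w : Fin n → Fin n → ℝ)
    (hsym : ∀ i j, w i j = w j i) (hnn : ∀ i j, 0 ≤ w i j)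
    (hdiag : ∀ i, w i i = 0) (hd : ∀ i, 0 < deg w i)
    (β γ : ℝ) (hβ0 : 0 ≤ β) (hβ1 : β ≤ 1)
    (hγ0 : 0 < |γ|) (hγ1 : |γ| < 1) :
    IsUnit ((1 : Matrix (Fin n) (Fin n) ℝ) - γ • propP w β) := by
  have hmul : ∀ s t : ℝ, Dpow w s * Dpow w t = Dpow w (s + t) := by
    intro s t
    simp only [Dpow, diagonal_mul_diagonal]
    rw [show (fun i => deg w i ^ s * deg w i ^ t) = fun i => deg w i ^ (s + t) from
      funext fun i => (Real.rpow_add (hd i) s t).symm]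
  have hTT : Dpow w β * Dpow w (-β) = 1 := by
    rw [hmul]
    simp [Dpow, Real.rpow_zero, Matrix.diagonal_one]
  have hTT' : Dpow w (-β) * Dpow w β = 1 := by
    rw [hmul]
    simp [Dpow, Real.rpow_zero, Matrix.diagonal_one]
  -- conjugation: D^β * P * D^{-β} = A * D^{-1}
  have hconj : Dpow w β * propP w β * Dpow w (-β) = Matrix.of w * Dpow w (-1) := by
    unfold propP
    rw [show Dpow w β * (Dpow w (-β) * Matrix.of w * Dpow w (β - 1)) =
        (Dpow w β * Dpow w (-β)) * Matrix.of w * Dpow w (β - 1) by noncomm_ring, hTT,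
      one_mul, mul_assoc, hmul, show β - 1 + -β = -1 by ring]
  set M : Matrix (Fin n) (Fin n) ℝ := 1 - γ • (Matrix.of w * Dpow w (-1)) with hM
  have hMdet : M.det ≠ 0 := by
    apply det_ne_zero_of_sum_col_lt_diag
    intro k
    have hMkk : M k k = 1 := by
      simp [hM, Matrix.sub_apply, Matrix.one_apply, Matrix.mul_apply, Dpow,
        Matrix.diagonal_apply, Finset.sum_ite_eq, hdiag k]
    have hMik : ∀ i, i ≠ k → M i k = -(γ * (w i k * (deg w k)⁻¹)) := by
      intro i hik
      simp [hM, Matrix.sub_apply, Matrix.one_apply_ne hik, Matrix.mul_apply, Dpow,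
        Matrix.diagonal_apply, Finset.sum_ite_eq, Real.rpow_neg_one]
    have hsum : ∑ i ∈ Finset.univ.erase k, ‖M i k‖ = |γ| := by
      have h1 : ∑ i ∈ Finset.univ.erase k, ‖M i k‖
          = ∑ i ∈ Finset.univ.erase k, |γ| * (w i k * (deg w k)⁻¹) := by
        apply Finset.sum_congr rfl
        intro i hi
        rw [hMik i (Finset.ne_of_mem_erase hi)]
        rw [Real.norm_eq_abs, abs_neg, abs_mul, abs_of_nonneg
          (mul_nonneg (hnn i k) (inv_nonneg.mpr (hd k).le))]
      rw [h1, ← Finset.mul_sum]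
      have h2 : ∑ i ∈ Finset.univ.erase k, w i k * (deg w k)⁻¹ = 1 := by
        rw [← Finset.sum_mul]
        have h3 : ∑ i ∈ Finset.univ.erase k, w i k = deg w k := by
          rw [Finset.sum_erase_eq_sub (Finset.mem_univ k), hdiag k, sub_zero]
          simp only [deg]
          exact Finset.sum_congr rfl fun i _ => hsym i k
        rw [h3, mul_inv_cancel₀ (hd k).ne']
      rw [h2, mul_one]
    rw [hsum, hMkk]
    simpa using hγ1
  -- transfer back via determinant of conjugation
  rw [Matrix.isUnit_iff_isUnit_det, isUnit_iff_ne_zero]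
  intro hdet
  apply hMdet
  have : M = Dpow w β * (1 - γ • propP w β) * Dpow w (-β) := by
    rw [Matrix.mul_sub, Matrix.sub_mul, mul_one, hTT, Matrix.mul_smul, Matrix.smul_mul, hconj,
      hM]
  rw [this, Matrix.det_mul, Matrix.det_mul, hdet, mul_zero, zero_mul]
end

section
/- If 0 < |γ| < 1, then the matrix series Σ_{ℓ=0}^∞ γ^ℓ·D^{1−β}·(D^{−1}·A)^ℓ·D^{β−1} converges and its sum equals (I − γ·P)^{−1}; in particular P^ℓ = D^{1−β}·(D^{−1}·A)^ℓ·D^{β−1} for every ℓ ≥ 0. -/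
open Finset Matrix

/-!
`P` is conjugate, by the diagonal matrix `D^{1-β}`, to the random-walk matrix `D⁻¹A`. The latter
is row-stochastic, so it has norm at most `1` for the `ℓ∞` operator norm; hence for `|γ| < 1`
the Neumann series of `γ D⁻¹A` converges to `(I - γ D⁻¹A)⁻¹`, and conjugating back gives the
series for `(I - γ P)⁻¹`.
-/

theorem Ring.inverse_conj {M₀ : Type*} [MonoidWithZero M₀] (u : M₀ˣ) (y : M₀) :
    Ring.inverse (↑u * y * ↑u⁻¹ : M₀) = ↑u * Ring.inverse y * ↑u⁻¹ := by
  rw [Ring.inverse_mul (Or.inr u⁻¹.isUnit), Ring.inverse_mul (Or.inl u.isUnit),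
    Ring.inverse_unit, Ring.inverse_unit, inv_inv, mul_assoc]

theorem hasSum_conj_geom_series_inverse {R : Type*} [NormedRing R] [HasSummableGeomSeries R]
    (u : Rˣ) {x : R} (hx : ‖x‖ < 1) :
    HasSum (fun i ↦ ↑u * x ^ i * ↑u⁻¹) (Ring.inverse (1 - ↑u * x * ↑u⁻¹)) := by
  have h : 1 - ↑u * x * ↑u⁻¹ = ↑u * (1 - x) * ↑u⁻¹ := by
    rw [mul_sub, sub_mul, mul_one, Units.mul_inv]
  rw [h, Ring.inverse_conj]
  exact ((hasSum_geom_series_inverse x hx).mul_left _).mul_right _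

section LinftyOpNorm

attribute [local instance] Matrix.linftyOpNormedRing Matrix.linftyOpNormedAlgebra

variable {ι : Type*} [Fintype ι] [DecidableEq ι]

theorem Matrix.linfty_opNorm_le_one_of_mem_rowStochastic {M : Matrix ι ι ℝ}
    (hM : M ∈ rowStochastic ℝ ι) : ‖M‖ ≤ 1 := by
  rw [linfty_opNorm_def, NNReal.coe_le_one]
  refine Finset.sup_le fun i _ ↦ ?_
  rw [← NNReal.coe_le_one, NNReal.coe_sum]
  simp_rw [coe_nnnorm, Real.norm_of_nonneg (nonneg_of_mem_rowStochastic hM)]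
  exact (sum_row_of_mem_rowStochastic hM i).le

theorem Matrix.hasSum_smul_conj_pow_of_mem_rowStochastic (u : (Matrix ι ι ℝ)ˣ)
    {S : Matrix ι ι ℝ} (hS : S ∈ rowStochastic ℝ ι) {γ : ℝ} (hγ : |γ| < 1) :
    HasSum (fun ℓ : ℕ ↦ γ ^ ℓ • ((u : Matrix ι ι ℝ) * S ^ ℓ * (↑u⁻¹ : Matrix ι ι ℝ)))
      (1 - γ • ((u : Matrix ι ι ℝ) * S * (↑u⁻¹ : Matrix ι ι ℝ)))⁻¹ := by
  have hnorm : ‖γ • S‖ < 1 :=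
    calc ‖γ • S‖ = |γ| * ‖S‖ := by rw [norm_smul, Real.norm_eq_abs]
      _ ≤ |γ| * 1 := by gcongr; exact linfty_opNorm_le_one_of_mem_rowStochastic hS
      _ < 1 := by rwa [mul_one]
  have h := hasSum_conj_geom_series_inverse u hnorm
  simp only [smul_pow, mul_smul_comm, smul_mul_assoc] at h
  rwa [nonsing_inv_eq_ringInverse]

end LinftyOpNorm

section Degree

variable {n : ℕ} {w : Fin n → Fin n → ℝ}

theorem Dpow_add (hd : ∀ i, 0 < deg w i) (a b : ℝ) :
    Dpow w (a + b) = Dpow w a * Dpow w b := by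
  simp only [Dpow, diagonal_mul_diagonal, Real.rpow_add (hd _)]

theorem Dpow_zero : Dpow w 0 = 1 := by
  simp [Dpow]

noncomputable def unitDpow (hd : ∀ i, 0 < deg w i) (t : ℝ) : (Matrix (Fin n) (Fin n) ℝ)ˣ where
  val := Dpow w t
  inv := Dpow w (-t)
  val_inv := by rw [← Dpow_add hd, add_neg_cancel, Dpow_zero]
  inv_val := by rw [← Dpow_add hd, neg_add_cancel, Dpow_zero]

@[simp]
theorem coe_unitDpow (hd : ∀ i, 0 < deg w i) (t : ℝ) :
    (unitDpow hd t : Matrix (Fin n) (Fin n) ℝ) = Dpow w t :=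
  rfl

@[simp]
theorem coe_inv_unitDpow (hd : ∀ i, 0 < deg w i) (t : ℝ) :
    (↑(unitDpow hd t)⁻¹ : Matrix (Fin n) (Fin n) ℝ) = Dpow w (-t) :=
  rfl

theorem Dpow_neg_one_mul_mem_rowStochastic (hnn : ∀ i j, 0 ≤ w i j) (hd : ∀ i, 0 < deg w i) :
    Dpow w (-1) * Matrix.of w ∈ rowStochastic ℝ (Fin n) := by
  have hentry : ∀ i j, (Dpow w (-1) * Matrix.of w) i j = (deg w i)⁻¹ * w i j := fun i j ↦ by
    simp [Dpow, Real.rpow_neg_one]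
  refine (mem_rowStochastic_iff_sum).2 ⟨fun i j ↦ ?_, fun i ↦ ?_⟩
  · rw [hentry]; exact mul_nonneg (inv_nonneg.2 (hd i).le) (hnn i j)
  · simp_rw [hentry, ← Finset.mul_sum]
    exact inv_mul_cancel₀ (hd i).ne'

theorem propP_eq_conj (hd : ∀ i, 0 < deg w i) (β : ℝ) :
    propP w β = Dpow w (1 - β) * (Dpow w (-1) * Matrix.of w) * Dpow w (β - 1) := by
  rw [propP, ← mul_assoc, ← Dpow_add hd]
  congr 3
  ring

end Degree

theorem neumann_series_propP_general {n : ℕ} (w : Fin n → Fin n → ℝ)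
    (hnn : ∀ i j, 0 ≤ w i j)
    (hd : ∀ i, 0 < deg w i)
    (β γ : ℝ)
    (hγ1 : |γ| < 1) :
    HasSum
      (fun ℓ : ℕ =>
        γ ^ ℓ • (Dpow w (1 - β) * (Dpow w (-1) * Matrix.of w) ^ ℓ * Dpow w (β - 1)))
      ((1 : Matrix (Fin n) (Fin n) ℝ) - γ • propP w β)⁻¹ ∧
    ∀ ℓ : ℕ,
      propP w β ^ ℓ = Dpow w (1 - β) * (Dpow w (-1) * Matrix.of w) ^ ℓ * Dpow w (β - 1) := by
  have hinv : (↑(unitDpow hd (1 - β))⁻¹ : Matrix (Fin n) (Fin n) ℝ) = Dpow w (β - 1) := by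
    rw [coe_inv_unitDpow, neg_sub]
  rw [propP_eq_conj hd β]
  refine ⟨?_, fun ℓ ↦ ?_⟩
  · simpa only [coe_unitDpow, hinv] using hasSum_smul_conj_pow_of_mem_rowStochastic
      (unitDpow hd (1 - β)) (Dpow_neg_one_mul_mem_rowStochastic hnn hd) hγ1
  · rw [← hinv, ← coe_unitDpow hd (1 - β), Units.conj_pow]

/-- If `0 < |γ| < 1`, the series `∑_{ℓ≥0} γ^ℓ D^{1-β} (D⁻¹ A)^ℓ D^{β-1}` converges
to `(I - γ P)⁻¹`; in particular `P^ℓ = D^{1-β} (D⁻¹ A)^ℓ D^{β-1}` for all `ℓ`. -/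
theorem neumann_series_propP {n : ℕ} (hn : 1 ≤ n) (w : Fin n → Fin n → ℝ)
    (hsym : ∀ i j, w i j = w j i) (hnn : ∀ i j, 0 ≤ w i j)
    (hdiag : ∀ i, w i i = 0) (hd : ∀ i, 0 < deg w i)
    (β γ : ℝ) (hβ0 : 0 ≤ β) (hβ1 : β ≤ 1)
    (hγ0 : 0 < |γ|) (hγ1 : |γ| < 1) :
    HasSum
      (fun ℓ : ℕ =>
        γ ^ ℓ • (Dpow w (1 - β) * (Dpow w (-1) * Matrix.of w) ^ ℓ * Dpow w (β - 1)))
      ((1 : Matrix (Fin n) (Fin n) ℝ) - γ • propP w β)⁻¹ ∧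
    ∀ ℓ : ℕ,
      propP w β ^ ℓ = Dpow w (1 - β) * (Dpow w (-1) * Matrix.of w) ^ ℓ * Dpow w (β - 1) :=
  neumann_series_propP_general w hnn hd β γ hγ1
end

section
/- If 0 < |γ| < 1 and γ₀ is any real number, then for every x ∈ ℝ^n the series π = Σ_{k=0}^∞ γ₀·γ^k·P^k·x converges in ℝ^n, its sum satisfies π = γ·P·π + γ₀·x, and π is the unique vector satisfying this equation. (Well-definedness of the exact propagation vector of Equation 2 with geometric weights γ_k = γ₀·γ^k.) -/
open Finset Matrix

noncomputable def Mmat {n : ℕ} (w : Fin n → Fin n → ℝ) : Matrix (Fin n) (Fin n) ℝ :=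
  Matrix.of fun i j => w i j / deg w j

lemma propP_eq {n : ℕ} (w : Fin n → Fin n → ℝ) (hd : ∀ i, 0 < deg w i) (β : ℝ) :
    propP w β = Dpow w (-β) * Mmat w * Dpow w β := by
  unfold propP Mmat Dpow
  rw [Matrix.mul_assoc, Matrix.mul_assoc]
  congr 1
  ext i j
  simp only [Matrix.mul_diagonal, Matrix.of_apply]
  rw [div_mul_eq_mul_div, mul_div_assoc, ← Real.rpow_sub_one (hd j).ne']

lemma DbDmb {n : ℕ} (w : Fin n → Fin n → ℝ) (hd : ∀ i, 0 < deg w i) (β : ℝ) :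
    Dpow w β * Dpow w (-β) = (1 : Matrix (Fin n) (Fin n) ℝ) := by
  unfold Dpow
  rw [Matrix.diagonal_mul_diagonal]
  have : (fun i => deg w i ^ β * deg w i ^ (-β)) = fun _ => (1:ℝ) := by
    funext i
    rw [← Real.rpow_add (hd i)]
    simp
  rw [this, Matrix.diagonal_one]

lemma propP_pow {n : ℕ} (w : Fin n → Fin n → ℝ) (hd : ∀ i, 0 < deg w i) (β : ℝ) (k : ℕ) :
    propP w β ^ k = Dpow w (-β) * Mmat w ^ k * Dpow w β := by
  induction k with
  | zero =>
    rw [pow_zero, pow_zero, Matrix.mul_one]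
    have := DbDmb w hd (-β)
    rw [neg_neg] at this
    exact this.symm
  | succ k ih =>
    rw [pow_succ, ih, propP_eq w hd β, pow_succ]
    calc Dpow w (-β) * Mmat w ^ k * Dpow w β * (Dpow w (-β) * Mmat w * Dpow w β)
        = Dpow w (-β) * Mmat w ^ k * (Dpow w β * Dpow w (-β)) * Mmat w * Dpow w β := by
          simp only [Matrix.mul_assoc]
      _ = Dpow w (-β) * (Mmat w ^ k * Mmat w) * Dpow w β := by
          rw [DbDmb w hd β]; simp only [Matrix.mul_one, Matrix.mul_assoc]

lemma Mpow_nonneg {n : ℕ} (w : Fin n → Fin n → ℝ) (hnn : ∀ i j, 0 ≤ w i j)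
    (hd : ∀ i, 0 < deg w i) (k : ℕ) (i j : Fin n) : 0 ≤ (Mmat w ^ k) i j := by
  induction k generalizing i j with
  | zero => simp [Matrix.one_apply]; split <;> norm_num
  | succ k ih =>
    rw [pow_succ, Matrix.mul_apply]
    exact Finset.sum_nonneg fun l _ => mul_nonneg (ih i l)
      (div_nonneg (hnn l j) (hd j).le)

lemma Mpow_colsum {n : ℕ} (w : Fin n → Fin n → ℝ) (hsym : ∀ i j, w i j = w j i)
    (hd : ∀ i, 0 < deg w i) (k : ℕ) (j : Fin n) : ∑ i, (Mmat w ^ k) i j = 1 := by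
  induction k generalizing j with
  | zero =>
    simp [Matrix.one_apply]
  | succ k ih =>
    simp only [pow_succ, Matrix.mul_apply]
    rw [Finset.sum_comm]
    have : ∀ l, ∑ i, (Mmat w ^ k) i l * Mmat w l j = Mmat w l j := by
      intro l
      rw [← Finset.sum_mul, ih l, one_mul]
    rw [Finset.sum_congr rfl fun l _ => this l]
    have : ∑ l, Mmat w l j = (∑ l, w l j) / deg w j := by
      simp [Mmat, Finset.sum_div]
    rw [this]
    have : ∑ l, w l j = deg w j := by
      simp only [deg]
      exact Finset.sum_congr rfl fun l _ => hsym l j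
    rw [this, div_self (hd j).ne']

lemma Mpow_le_one {n : ℕ} (w : Fin n → Fin n → ℝ) (hsym : ∀ i j, w i j = w j i)
    (hnn : ∀ i j, 0 ≤ w i j) (hd : ∀ i, 0 < deg w i) (k : ℕ) (i j : Fin n) :
    (Mmat w ^ k) i j ≤ 1 := by
  calc (Mmat w ^ k) i j ≤ ∑ l, (Mmat w ^ k) l j :=
        Finset.single_le_sum (fun l _ => Mpow_nonneg w hnn hd k l j) (Finset.mem_univ i)
    _ = 1 := Mpow_colsum w hsym hd k j

lemma propP_pow_entry {n : ℕ} (w : Fin n → Fin n → ℝ) (hd : ∀ i, 0 < deg w i)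
    (β : ℝ) (k : ℕ) (i j : Fin n) :
    (propP w β ^ k) i j = deg w i ^ (-β) * (Mmat w ^ k) i j * deg w j ^ β := by
  rw [propP_pow w hd β k]
  simp [Dpow, Matrix.mul_diagonal, Matrix.diagonal_mul, mul_comm, mul_assoc, mul_left_comm]

lemma propP_pow_entry_bound {n : ℕ} (w : Fin n → Fin n → ℝ)
    (hsym : ∀ i j, w i j = w j i) (hnn : ∀ i j, 0 ≤ w i j)
    (hd : ∀ i, 0 < deg w i) (β : ℝ) (k : ℕ) (i j : Fin n) :
    |(propP w β ^ k) i j| ≤ deg w i ^ (-β) * deg w j ^ β := by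
  rw [propP_pow_entry w hd β k i j]
  have h1 : 0 ≤ deg w i ^ (-β) := (Real.rpow_pos_of_pos (hd i) _).le
  have h2 : 0 ≤ deg w j ^ β := (Real.rpow_pos_of_pos (hd j) _).le
  have h3 := Mpow_nonneg w hnn hd k i j
  have h4 := Mpow_le_one w hsym hnn hd k i j
  rw [abs_of_nonneg (by positivity)]
  calc deg w i ^ (-β) * (Mmat w ^ k) i j * deg w j ^ β
      ≤ deg w i ^ (-β) * 1 * deg w j ^ β := by
        apply mul_le_mul_of_nonneg_right _ h2
        exact mul_le_mul_of_nonneg_left h4 h1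
    _ = deg w i ^ (-β) * deg w j ^ β := by ring

/-- Uniform bound on the `k`-th power applied to a vector. -/
lemma propP_pow_mulVec_bound {n : ℕ} (w : Fin n → Fin n → ℝ)
    (hsym : ∀ i j, w i j = w j i) (hnn : ∀ i j, 0 ≤ w i j)
    (hd : ∀ i, 0 < deg w i) (β : ℝ) (k : ℕ) (v : Fin n → ℝ) (i : Fin n) :
    |((propP w β ^ k).mulVec v) i| ≤ deg w i ^ (-β) * ∑ j, deg w j ^ β * |v j| := by
  rw [Matrix.mulVec, dotProduct]
  calc |∑ j, (propP w β ^ k) i j * v j| ≤ ∑ j, |(propP w β ^ k) i j * v j| :=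
        Finset.abs_sum_le_sum_abs _ _
    _ ≤ ∑ j, deg w i ^ (-β) * (deg w j ^ β * |v j|) := by
        apply Finset.sum_le_sum
        intro j _
        rw [abs_mul, ← mul_assoc]
        exact mul_le_mul_of_nonneg_right (propP_pow_entry_bound w hsym hnn hd β k i j)
          (abs_nonneg _)
    _ = deg w i ^ (-β) * ∑ j, deg w j ^ β * |v j| := by rw [← Finset.mul_sum]


/-- Well-definedness of the exact propagation vector with geometric weights
`γ_k = γ₀ γ^k`: the series `π = ∑_{k≥0} γ₀ γ^k P^k x` converges, its sum
satisfies `π = γ P π + γ₀ x`, and it is the unique such vector. -/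
theorem exact_propagation_vector {n : ℕ} (hn : 1 ≤ n) (w : Fin n → Fin n → ℝ)
    (hsym : ∀ i j, w i j = w j i) (hnn : ∀ i j, 0 ≤ w i j)
    (hdiag : ∀ i, w i i = 0) (hd : ∀ i, 0 < deg w i)
    (β γ₀ γ : ℝ) (hβ0 : 0 ≤ β) (hβ1 : β ≤ 1)
    (hγ0 : 0 < |γ|) (hγ1 : |γ| < 1)
    (x : Fin n → ℝ) :
    ∃ π : Fin n → ℝ,
      HasSum (fun k : ℕ => (γ₀ * γ ^ k) • (propP w β ^ k).mulVec x) π ∧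
      π = γ • (propP w β).mulVec π + γ₀ • x ∧
      ∀ π' : Fin n → ℝ, π' = γ • (propP w β).mulVec π' + γ₀ • x → π' = π := by
  set f : ℕ → Fin n → ℝ := fun k => (γ₀ * γ ^ k) • (propP w β ^ k).mulVec x with hf
  -- summability
  have hsummable : Summable f := by
    rw [Pi.summable]
    intro i
    apply Summable.of_norm_bounded
      (g := fun k => |γ|^k * (|γ₀| * (deg w i ^ (-β) * ∑ j, deg w j ^ β * |x j|)))
    · exact (summable_geometric_of_lt_one (abs_nonneg γ) hγ1).mul_right _
    · intro k
      simp only [hf, Pi.smul_apply, smul_eq_mul, Real.norm_eq_abs, abs_mul, abs_pow]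
      calc |γ₀| * |γ|^k * |((propP w β ^ k).mulVec x) i|
          ≤ |γ₀| * |γ|^k * (deg w i ^ (-β) * ∑ j, deg w j ^ β * |x j|) := by
            apply mul_le_mul_of_nonneg_left
              (propP_pow_mulVec_bound w hsym hnn hd β k x i)
            positivity
        _ = |γ|^k * (|γ₀| * (deg w i ^ (-β) * ∑ j, deg w j ^ β * |x j|)) := by ring
  set π : Fin n → ℝ := ∑' k, f k with hπ
  have hsum : HasSum f π := hsummable.hasSum
  -- fixed point
  have hfix : π = γ • (propP w β).mulVec π + γ₀ • x := by
    have hL : HasSum (fun k => (propP w β).mulVec (f k)) ((propP w β).mulVec π) := by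
      exact ((Matrix.mulVecLin (propP w β)).toContinuousLinearMap).hasSum hsum
    have hL2 : HasSum (fun k => f (k + 1)) (γ • (propP w β).mulVec π) := by
      have := hL.const_smul γ
      convert this using 2 with k
      simp only [hf, Matrix.mulVec_smul, smul_smul]
      rw [Matrix.mulVec_mulVec, ← pow_succ']
      congr 1
      ring
    have hL3 : HasSum (fun k => f (k + 1)) (π - f 0) := by
      rw [hasSum_nat_add_iff 1]
      simpa using hsum
    have h0 : f 0 = γ₀ • x := by
      simp [hf, Matrix.one_mulVec]
    have := hL2.unique hL3
    rw [h0] at this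
    rw [this]
    abel
  refine ⟨π, hsum, hfix, ?_⟩
  -- uniqueness
  intro π' hπ'
  have hδ : π' - π = γ • (propP w β).mulVec (π' - π) := by
    rw [Matrix.mulVec_sub, smul_sub]
    nth_rewrite 1 [hπ', hfix]
    abel
  have hiter : ∀ k : ℕ, π' - π = γ ^ k • (propP w β ^ k).mulVec (π' - π) := by
    intro k
    induction k with
    | zero => simp [Matrix.one_mulVec]
    | succ k ih =>
      nth_rewrite 1 [ih, hδ]
      rw [Matrix.mulVec_smul, smul_smul, Matrix.mulVec_mulVec, ← pow_succ, ← pow_succ]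
  have hzero : π' - π = 0 := by
    funext i
    have hb : ∀ k : ℕ, |(π' - π) i| ≤
        |γ|^k * (deg w i ^ (-β) * ∑ j, deg w j ^ β * |(π' - π) j|) := by
      intro k
      nth_rewrite 1 [hiter k]
      simp only [Pi.smul_apply, smul_eq_mul, abs_mul, abs_pow]
      exact mul_le_mul_of_nonneg_left
        (propP_pow_mulVec_bound w hsym hnn hd β k _ i) (by positivity)
    have htend : Filter.Tendsto
        (fun k : ℕ => |γ|^k * (deg w i ^ (-β) * ∑ j, deg w j ^ β * |(π' - π) j|))
        Filter.atTop (nhds 0) := by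
      have := (tendsto_pow_atTop_nhds_zero_of_lt_one (abs_nonneg γ) hγ1).mul_const
        (deg w i ^ (-β) * ∑ j, deg w j ^ β * |(π' - π) j|)
      simpa using this
    have : |(π' - π) i| ≤ 0 := ge_of_tendsto' htend fun k => hb k
    have := abs_nonneg ((π' - π) i)
    simp only [Pi.zero_apply]
    linarith [abs_nonneg ((π' - π) i), (abs_eq_zero.mp (le_antisymm ‹|(π' - π) i| ≤ 0› (abs_nonneg _)))]
  exact sub_eq_zero.mp hzero
end

section
/- Suppose 0 < γ < 1 and γ₀ = 1 − γ. If r ∈ ℝ^n satisfies |r(j)| ≤ r_max·d(j)^{1−β} for every node j (where r_max ≥ 0), then for every node i the vector γ₀·(I − γ·P)^{−1}·r satisfies |(γ₀·(I − γ·P)^{−1}·r)(i)| ≤ r_max·d(i)^{1−β}. (Core entrywise bound in the proof of Theorem 2.) -/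
open Finset Matrix

/-- Core entrywise bound in the proof of Theorem 2: if `0 < γ < 1`,
`γ₀ = 1 - γ`, and `|r(j)| ≤ r_max d(j)^{1-β}` for all `j`, then every entry of
`γ₀ (I - γ P)⁻¹ r` is bounded by `r_max d(i)^{1-β}`. -/
theorem entrywise_bound {n : ℕ} (hn : 1 ≤ n) (w : Fin n → Fin n → ℝ)
    (hsym : ∀ i j, w i j = w j i) (hnn : ∀ i j, 0 ≤ w i j)
    (hdiag : ∀ i, w i i = 0) (hd : ∀ i, 0 < deg w i)
    (β γ γ₀ : ℝ) (hβ0 : 0 ≤ β) (hβ1 : β ≤ 1)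
    (hγ0 : 0 < γ) (hγ1 : γ < 1) (hγ₀ : γ₀ = 1 - γ)
    (rmax : ℝ) (hrmax : 0 ≤ rmax) (r : Fin n → ℝ)
    (hr : ∀ j, |r j| ≤ rmax * deg w j ^ ((1 : ℝ) - β)) :
    ∀ i,
      |(γ₀ • (((1 : Matrix (Fin n) (Fin n) ℝ) - γ • propP w β)⁻¹).mulVec r) i| ≤
        rmax * deg w i ^ ((1 : ℝ) - β) := by
  set P := propP w β with hP
  set v : Fin n → ℝ := fun j => deg w j ^ ((1 : ℝ) - β) with hv
  have hvpos : ∀ j, 0 < v j := fun j => Real.rpow_pos_of_pos (hd j) _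
  have hPapp : ∀ i j, P i j = deg w i ^ (-β) * w i j * deg w j ^ (β - 1) := by
    intro i j
    simp [hP, propP, Dpow, Matrix.mul_diagonal, Matrix.diagonal_mul]
  have hPnn : ∀ i j, 0 ≤ P i j := by
    intro i j
    rw [hPapp]
    exact mul_nonneg (mul_nonneg (Real.rpow_pos_of_pos (hd i) _).le (hnn i j))
      (Real.rpow_pos_of_pos (hd j) _).le
  have hPv : ∀ i, ∑ k, P i k * v k = v i := by
    intro i
    have hterm : ∀ k, P i k * v k = deg w i ^ (-β) * w i k := by
      intro k
      rw [hPapp, hv]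
      have h1 : deg w k ^ (β - 1) * deg w k ^ ((1 : ℝ) - β) = 1 := by
        rw [← Real.rpow_add (hd k)]
        norm_num
      calc deg w i ^ (-β) * w i k * deg w k ^ (β - 1) * deg w k ^ ((1 : ℝ) - β)
          = deg w i ^ (-β) * w i k * (deg w k ^ (β - 1) * deg w k ^ ((1 : ℝ) - β)) := by
            ring
        _ = deg w i ^ (-β) * w i k := by rw [h1, mul_one]
    rw [Finset.sum_congr rfl fun k _ => hterm k, ← Finset.mul_sum]
    have hdeg : (∑ k, w i k) = deg w i := rfl
    rw [hdeg]
    have h2 : deg w i ^ ((1 : ℝ) - β) = deg w i ^ (-β) * deg w i := by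
      rw [show (1 : ℝ) - β = -β + 1 by ring, Real.rpow_add (hd i), Real.rpow_one]
    exact h2.symm
  intro i
  by_cases hdet : IsUnit ((1 - γ • P).det)
  · set x : Fin n → ℝ := γ₀ • ((1 - γ • P)⁻¹).mulVec r with hx
    have hMx : (1 - γ • P).mulVec x = γ₀ • r := by
      rw [hx, Matrix.mulVec_smul, Matrix.mulVec_mulVec, Matrix.mul_nonsing_inv _ hdet,
        Matrix.one_mulVec]
    have hkey : ∀ j, x j = γ * ∑ k, P j k * x k + γ₀ * r j := by
      intro j
      have h := congrFun hMx j
      have h2 : (1 - γ • P).mulVec x j = x j - γ * ∑ k, P j k * x k := by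
        rw [Matrix.sub_mulVec, Matrix.one_mulVec, Matrix.smul_mulVec]
        simp [Matrix.mulVec, dotProduct]
      rw [h2] at h
      have h3 : (γ₀ • r) j = γ₀ * r j := rfl
      rw [h3] at h
      linarith
    obtain ⟨i₀, -, hi₀⟩ := Finset.exists_max_image Finset.univ
      (fun j => |x j| / v j) ⟨i, Finset.mem_univ i⟩
    set c : ℝ := |x i₀| / v i₀ with hc
    have hc0 : 0 ≤ c := div_nonneg (abs_nonneg _) (hvpos i₀).le
    have hbound : ∀ j, |x j| ≤ c * v j := by
      intro j
      exact (div_le_iff₀ (hvpos j)).mp (hi₀ j (Finset.mem_univ j))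
    have hxi₀ : |x i₀| = c * v i₀ := by
      rw [hc, div_mul_cancel₀ _ (hvpos i₀).ne']
    have hγ₀pos : 0 < γ₀ := by rw [hγ₀]; linarith
    have hsum : |∑ k, P i₀ k * x k| ≤ c * v i₀ := by
      calc |∑ k, P i₀ k * x k| ≤ ∑ k, |P i₀ k * x k| :=
            Finset.abs_sum_le_sum_abs _ _
        _ ≤ ∑ k, P i₀ k * (c * v k) := by
            refine Finset.sum_le_sum fun k _ => ?_
            rw [abs_mul, abs_of_nonneg (hPnn i₀ k)]
            exact mul_le_mul_of_nonneg_left (hbound k) (hPnn i₀ k)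
        _ = c * ∑ k, P i₀ k * v k := by
            rw [Finset.mul_sum]; exact Finset.sum_congr rfl fun k _ => by ring
        _ = c * v i₀ := by rw [hPv]
    have hle : c * v i₀ ≤ γ * (c * v i₀) + γ₀ * (rmax * v i₀) := by
      calc c * v i₀ = |x i₀| := hxi₀.symm
        _ = |γ * ∑ k, P i₀ k * x k + γ₀ * r i₀| := by rw [← hkey i₀]
        _ ≤ |γ * ∑ k, P i₀ k * x k| + |γ₀ * r i₀| := abs_add_le _ _
        _ = γ * |∑ k, P i₀ k * x k| + γ₀ * |r i₀| := by
            rw [abs_mul, abs_mul, abs_of_pos hγ0, abs_of_pos hγ₀pos]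
        _ ≤ γ * (c * v i₀) + γ₀ * (rmax * v i₀) :=
            add_le_add (mul_le_mul_of_nonneg_left hsum hγ0.le)
              (mul_le_mul_of_nonneg_left (hr i₀) hγ₀pos.le)
    have hcr : c ≤ rmax := by
      have h1 : (1 - γ) * c * v i₀ ≤ (1 - γ) * rmax * v i₀ := by
        rw [hγ₀] at hle; nlinarith
      have h2 : (1 - γ) * c ≤ (1 - γ) * rmax :=
        le_of_mul_le_mul_right (by linarith [h1]) (hvpos i₀)
      have := mul_le_mul_of_nonneg_left h2 (le_of_lt (by linarith : (0:ℝ) < 1))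
      nlinarith
    calc |x i| ≤ c * v i := hbound i
      _ ≤ rmax * v i := mul_le_mul_of_nonneg_right hcr (hvpos i).le
  · rw [Matrix.nonsing_inv_apply_not_isUnit _ hdet]
    simp only [Matrix.zero_mulVec, Pi.smul_apply, smul_eq_mul, Pi.zero_apply, mul_zero,
      abs_zero]
    exact mul_nonneg hrmax (hvpos i).le
end

section
/- Suppose 0 < γ < 1 and γ₀ = 1 − γ. Let π ∈ ℝ^n satisfy π = γ·P·π + γ₀·x (the exact propagation vector), and let π̂, r ∈ ℝ^n satisfy π̂ = γ·P·π̂ + γ₀·(x − r) (the approximate estimate with residual r). If |r(i)| ≤ r_max·d(i)^{1−β} for every node i (the termination condition of the propagation algorithm, with r_max ≥ 0), then |π(i) − π̂(i)| ≤ r_max·d(i)^{1−β} for every node i. (Theorem 2, Error Analysis.) -/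
open Finset Matrix

/-- Theorem 2 (Error Analysis): with `0 < γ < 1` and `γ₀ = 1 - γ`, if the exact
propagation vector `π` satisfies `π = γ P π + γ₀ x`, the approximate estimate
`πh` satisfies `πh = γ P πh + γ₀ (x - r)`, and the residual satisfies the
termination condition `|r(i)| ≤ r_max d(i)^{1-β}` at every node, then
`|π(i) - πh(i)| ≤ r_max d(i)^{1-β}` at every node. -/
theorem error_analysis {n : ℕ} (hn : 1 ≤ n) (w : Fin n → Fin n → ℝ)
    (hsym : ∀ i j, w i j = w j i) (hnn : ∀ i j, 0 ≤ w i j)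
    (hdiag : ∀ i, w i i = 0) (hd : ∀ i, 0 < deg w i)
    (β γ γ₀ : ℝ) (hβ0 : 0 ≤ β) (hβ1 : β ≤ 1)
    (hγ0 : 0 < γ) (hγ1 : γ < 1) (hγ₀ : γ₀ = 1 - γ)
    (rmax : ℝ) (hrmax : 0 ≤ rmax) (x r π πh : Fin n → ℝ)
    (hπ : π = γ • (propP w β).mulVec π + γ₀ • x)
    (hπh : πh = γ • (propP w β).mulVec πh + γ₀ • (x - r))
    (hr : ∀ i, |r i| ≤ rmax * deg w i ^ ((1 : ℝ) - β)) :
    ∀ i, |π i - πh i| ≤ rmax * deg w i ^ ((1 : ℝ) - β) := by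

  intro i
  set e : Fin n → ℝ := π - πh with he_def
  set v : Fin n → ℝ := fun i => deg w i ^ ((1 : ℝ) - β) with hv_def
  have hv : ∀ i, 0 < v i := fun i => Real.rpow_pos_of_pos (hd i) _
  -- entry of propP
  have hP : ∀ i j, propP w β i j = deg w i ^ (-β) * w i j * deg w j ^ (β - 1) := by
    intro i j
    simp [propP, Dpow, Matrix.mul_diagonal, Matrix.diagonal_mul]
  have hPnn : ∀ i j, 0 ≤ propP w β i j := by
    intro i j
    rw [hP]
    have h1 := (Real.rpow_pos_of_pos (hd i) (-β)).le
    have h2 := (Real.rpow_pos_of_pos (hd j) (β-1)).le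
    exact mul_nonneg (mul_nonneg h1 (hnn i j)) h2
  -- fixed point equation for e
  have he : ∀ i, e i = γ * ((propP w β).mulVec e) i + γ₀ * r i := by
    intro i
    have h1 := congrFun hπ i
    have h2 := congrFun hπh i
    have h3 : (propP w β).mulVec e = (propP w β).mulVec π - (propP w β).mulVec πh := by
      rw [he_def, Matrix.mulVec_sub]
    have h4 := congrFun h3 i
    simp only [Pi.add_apply, Pi.smul_apply, Pi.sub_apply, smul_eq_mul] at h1 h2 h4
    simp only [he_def, Pi.sub_apply]
    rw [h1, h2]
    ring_nf
    nlinarith [h4]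
  -- key eigenvector identity: ∑ j, P i j * v j = v i
  have hPv : ∀ i, ∑ j, propP w β i j * v j = v i := by
    intro i
    have : ∀ j, propP w β i j * v j = deg w i ^ (-β) * w i j := by
      intro j
      rw [hP, hv_def]
      have : deg w j ^ (β - 1) * deg w j ^ ((1 : ℝ) - β) = 1 := by
        rw [← Real.rpow_add (hd j)]
        norm_num
      calc deg w i ^ (-β) * w i j * deg w j ^ (β - 1) * deg w j ^ ((1:ℝ) - β)
          = deg w i ^ (-β) * w i j * (deg w j ^ (β - 1) * deg w j ^ ((1:ℝ) - β)) := by ring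
        _ = deg w i ^ (-β) * w i j := by rw [this]; ring
    rw [Finset.sum_congr rfl (fun j _ => this j), ← Finset.mul_sum]
    have hsum : ∑ j, w i j = deg w i := rfl
    rw [hsum, hv_def]
    nth_rewrite 2 [show deg w i = deg w i ^ (1:ℝ) from (Real.rpow_one _).symm]
    rw [← Real.rpow_add (hd i)]
    ring_nf
  -- maximum of |e|/v
  obtain ⟨i₀, -, hmax⟩ := Finset.exists_max_image Finset.univ (fun j => |e j| / v j)
    ⟨⟨0, hn⟩, Finset.mem_univ _⟩
  set M : ℝ := |e i₀| / v i₀ with hM_def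
  have hM0 : 0 ≤ M := div_nonneg (abs_nonneg _) (hv i₀).le
  have hle : ∀ j, |e j| ≤ M * v j := by
    intro j
    have := hmax j (Finset.mem_univ j)
    calc |e j| = |e j| / v j * v j := (div_mul_cancel₀ _ (hv j).ne').symm
      _ ≤ M * v j := mul_le_mul_of_nonneg_right this (hv j).le
  have heq : |e i₀| = M * v i₀ := (div_mul_cancel₀ _ (hv i₀).ne').symm
  -- bound at i₀
  have hbound : |e i₀| ≤ γ * (M * v i₀) + γ₀ * (rmax * v i₀) := by
    rw [he i₀]
    refine (abs_add_le _ _).trans ?_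
    have hγ₀pos : (0:ℝ) < γ₀ := by rw [hγ₀]; linarith
    rw [abs_mul, abs_mul, abs_of_pos hγ0, abs_of_pos hγ₀pos]
    refine add_le_add ?_ (mul_le_mul_of_nonneg_left (hr i₀) hγ₀pos.le)
    refine mul_le_mul_of_nonneg_left ?_ hγ0.le
    have h1 : |((propP w β).mulVec e) i₀| ≤ ∑ j, propP w β i₀ j * |e j| := by
      rw [Matrix.mulVec, dotProduct]
      refine (Finset.abs_sum_le_sum_abs _ _).trans ?_
      apply Finset.sum_le_sum
      intro j _
      rw [abs_mul, abs_of_nonneg (hPnn i₀ j)]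
    refine h1.trans ?_
    have h2 : ∑ j, propP w β i₀ j * |e j| ≤ ∑ j, propP w β i₀ j * (M * v j) := by
      apply Finset.sum_le_sum
      intro j _
      exact mul_le_mul_of_nonneg_left (hle j) (hPnn i₀ j)
    refine h2.trans ?_
    have : ∑ j, propP w β i₀ j * (M * v j) = M * ∑ j, propP w β i₀ j * v j := by
      rw [Finset.mul_sum]; apply Finset.sum_congr rfl; intros; ring
    rw [this, hPv i₀]
  -- conclude M ≤ rmax
  have hMr : M ≤ rmax := by
    rw [heq, hγ₀] at hbound
    have hvpos := hv i₀
    by_contra hcon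
    push_neg at hcon
    nlinarith [mul_pos (mul_pos (sub_pos.mpr hγ1) (sub_pos.mpr hcon)) hvpos]
  have : |e i| ≤ rmax * v i :=
    (hle i).trans (mul_le_mul_of_nonneg_right hMr (hv i).le)
  simpa [he_def, hv_def] using this
end
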